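/- For all natural numbers n ≥ 1, ∑_{k=0}^{n} C(2n, 2k) · Γ(n+2k) · Γ(3n-2k) = (Γ(n)²/2) · (Γ(4n)/Γ(2n) + 2·Γ(2n)²/Γ(n)²). -/

import Mathlib

/-!
Write `n = d + 1`. All Gamma values are factorials, and
`C(2n, j) (d + j)! (d + 2n - j)! = (2n)! d!² C(d + j, d) C(d + 2n - j, d)`.
Since `∑ C(d + j, d) Xʲ = (1 - X)^{-(d+1)}`, the sum of the right-hand side over all `j` is a
coefficient of `(1 - X)^{-2(d+1)}`, and its alternating sum is a coefficient of
`(1 - X)^{-(d+1)} (1 + X)^{-(d+1)} = (1 - X²)^{-(d+1)}`. The sum over even `j` is half of the two.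
-/

open Finset Real PowerSeries
open scoped Nat

namespace PowerSeries

variable {R : Type*} [CommRing R]

theorem coeff_invOneSubPow_succ (d n : ℕ) :
    coeff n (invOneSubPow R (d + 1) : R⟦X⟧) = (d + n).choose d := by
  rw [invOneSubPow_val_succ_eq_mk_add_choose, coeff_mk]

theorem invOneSubPow_mul_one_sub_pow (d : ℕ) :
    (invOneSubPow R d : R⟦X⟧) * (1 - X) ^ d = 1 := by
  rw [← invOneSubPow_inv_eq_one_sub_pow, Units.val_inv]

theorem rescale_neg_one_invOneSubPow_mul_invOneSubPow (d : ℕ) :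
    rescale (-1 : R) (invOneSubPow R d : R⟦X⟧) * invOneSubPow R d
      = expand 2 two_ne_zero (invOneSubPow R d : R⟦X⟧) := by
  set u : R⟦X⟧ := (invOneSubPow R d : R⟦X⟧)
  have hu : u * (1 - X) ^ d = 1 := invOneSubPow_mul_one_sub_pow d
  have hL : (1 - X ^ 2 : R⟦X⟧) ^ d * (rescale (-1 : R) u * u) = 1 := by
    have h := congrArg (rescale (-1 : R)) hu
    rw [map_mul, map_pow, map_sub, map_one, rescale_neg_one_X, sub_neg_eq_add] at h
    rw [show (1 - X ^ 2 : R⟦X⟧) = (1 - X) * (1 + X) by ring, mul_pow]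
    linear_combination rescale (-1 : R) u * (1 + X) ^ d * hu + h
  have hR : expand 2 two_ne_zero u * (1 - X ^ 2 : R⟦X⟧) ^ d = 1 := by
    simpa using congrArg (expand 2 two_ne_zero) hu
  exact (left_inv_eq_right_inv hR hL).symm

end PowerSeries

namespace Finset

theorem sum_range_choose_add_mul_choose_add (d e m : ℕ) :
    ∑ j ∈ range (m + 1), (d + j).choose d * (e + (m - j)).choose e
      = (d + e + 1 + m).choose (d + e + 1) := by
  have h := congrArg (coeff (R := ℤ) m ∘ Units.val) (invOneSubPow_add ℤ (d + 1) (e + 1))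
  simp only [Function.comp_apply, Units.val_mul, coeff_mul,
    Nat.sum_antidiagonal_eq_sum_range_succ_mk, show d + 1 + (e + 1) = d + e + 1 + 1 by ring,
    coeff_invOneSubPow_succ] at h
  exact_mod_cast h.symm

theorem sum_range_neg_one_pow_mul_choose_add_mul_choose_add (d r : ℕ) :
    ∑ j ∈ range (2 * r + 1), (-1 : ℤ) ^ j * ((d + j).choose d * (d + (2 * r - j)).choose d)
      = (d + r).choose d := by
  have h := congrArg (coeff (2 * r))
    (rescale_neg_one_invOneSubPow_mul_invOneSubPow (R := ℤ) (d + 1))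
  simp only [coeff_mul, Nat.sum_antidiagonal_eq_sum_range_succ_mk, coeff_expand_mul, coeff_rescale,
    coeff_invOneSubPow_succ] at h
  rw [← h]
  exact sum_congr rfl fun j _ ↦ (mul_assoc _ _ _).symm

theorem two_mul_sum_range_even {R : Type*} [CommRing R] (f : ℕ → R) (m : ℕ) :
    2 * ∑ k ∈ range (m + 1), f (2 * k)
      = ∑ j ∈ range (2 * m + 1), f j + ∑ j ∈ range (2 * m + 1), (-1) ^ j * f j := by
  induction m with
  | zero => simp; ring
  | succ m ih =>
    rw [sum_range_succ, mul_add, ih, show 2 * (m + 1) = 2 * m + 1 + 1 by ring]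
    simp only [sum_range_succ, pow_succ, pow_mul]
    ring

end Finset

theorem Nat.choose_mul_factorial_add_mul_factorial_add {N j : ℕ} (d : ℕ) (hj : j ≤ N) :
    N.choose j * (d + j)! * (d + (N - j))!
      = N ! * d ! ^ 2 * ((d + j).choose d * (d + (N - j)).choose d) := by
  rw [← Nat.choose_mul_factorial_mul_factorial hj, ← add_choose_mul_factorial_mul_factorial d j,
    ← add_choose_mul_factorial_mul_factorial d (N - j), choose_symm_add, choose_symm_add]
  ring

theorem two_mul_sum_choose_even_mul_factorial_add_mul_factorial_add (d m : ℕ) :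
    2 * ∑ k ∈ range (m + 1), (2 * m).choose (2 * k) * (d + 2 * k)! * (d + (2 * m - 2 * k))!
      = (2 * m)! * d ! ^ 2 * ((2 * d + 1 + 2 * m).choose (2 * d + 1) + (d + m).choose d) := by
  have hterm : ∀ j ∈ range (2 * m + 1),
      ((2 * m).choose j * (d + j)! * (d + (2 * m - j))! : ℤ)
        = (2 * m)! * d ! ^ 2 * ((d + j).choose d * (d + (2 * m - j)).choose d) := fun j hj ↦ by
    exact_mod_cast Nat.choose_mul_factorial_add_mul_factorial_add d (mem_range_succ_iff.mp hj)
  have hsum : ∑ j ∈ range (2 * m + 1), ((2 * m).choose j * (d + j)! * (d + (2 * m - j))! : ℤ)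
      = (2 * m)! * d ! ^ 2 * (2 * d + 1 + 2 * m).choose (2 * d + 1) := by
    rw [sum_congr rfl hterm, ← mul_sum, show 2 * d + 1 = d + d + 1 by ring]
    exact_mod_cast congrArg _ (sum_range_choose_add_mul_choose_add d d (2 * m))
  have halt : ∑ j ∈ range (2 * m + 1),
      (-1) ^ j * ((2 * m).choose j * (d + j)! * (d + (2 * m - j))! : ℤ)
        = (2 * m)! * d ! ^ 2 * (d + m).choose d := by
    rw [sum_congr rfl fun j hj ↦ by rw [hterm j hj, mul_left_comm], ← mul_sum,
      sum_range_neg_one_pow_mul_choose_add_mul_choose_add]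
  have h := two_mul_sum_range_even
    (fun j ↦ ((2 * m).choose j * (d + j)! * (d + (2 * m - j))! : ℤ)) m
  rw [hsum, halt, ← mul_add] at h
  exact_mod_cast h

theorem two_mul_factorial_mul_sum_choose_even_mul_factorial_add_mul_factorial_add (d : ℕ) :
    2 * (2 * d + 1)! * ∑ k ∈ range (d + 1 + 1),
        (2 * (d + 1)).choose (2 * k) * (d + 2 * k)! * (d + (2 * (d + 1) - 2 * k))!
      = d ! ^ 2 * (4 * d + 3)! + 2 * (2 * d + 1)! ^ 3 := by
  have key := two_mul_sum_choose_even_mul_factorial_add_mul_factorial_add d (d + 1)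
  have hB := Nat.choose_mul_factorial_mul_factorial (show 2 * d + 1 ≤ 4 * d + 3 by omega)
  have hC := Nat.choose_mul_factorial_mul_factorial (show d ≤ 2 * d + 1 by omega)
  have hF : (2 * (d + 1))! = (2 * d + 1 + 1) * (2 * d + 1)! := Nat.factorial_succ _
  rw [show 2 * d + 1 + 2 * (d + 1) = 4 * d + 3 by ring, show d + (d + 1) = 2 * d + 1 by ring,
    hF] at key
  rw [show 4 * d + 3 - (2 * d + 1) = 2 * (d + 1) by omega, hF] at hB
  rw [show 2 * d + 1 - d = d + 1 by omega, Nat.factorial_succ] at hC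
  rw [mul_right_comm, key, ← hB, ← hC]
  ring

theorem Real.Gamma_eq_factorial_of_eq {x : ℝ} {m : ℕ} (h : x = m + 1) : Real.Gamma x = m ! := by
  rw [h, Real.Gamma_nat_eq_factorial]

theorem stmt6 (n : ℕ) (hn : 1 ≤ n) :
    ∑ k ∈ Finset.range (n + 1),
        (Nat.choose (2 * n) (2 * k) : ℝ) * Real.Gamma (n + 2 * k)
          * Real.Gamma (3 * (n : ℝ) - 2 * k)
      = Real.Gamma n ^ 2 / 2 * (Real.Gamma (4 * n) / Real.Gamma (2 * n)
          + 2 * Real.Gamma (2 * n) ^ 2 / Real.Gamma n ^ 2) := by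
  obtain ⟨d, rfl⟩ : ∃ d, n = d + 1 := ⟨n - 1, by omega⟩
  have hterm : ∀ k ∈ range (d + 1 + 1),
      ((2 * (d + 1)).choose (2 * k) : ℝ) * Gamma ((d + 1 : ℕ) + 2 * k)
          * Gamma (3 * ((d + 1 : ℕ) : ℝ) - 2 * k)
        = (2 * (d + 1)).choose (2 * k) * (d + 2 * k)! * (d + (2 * (d + 1) - 2 * k))! :=
    fun k hk ↦ by
      have h2k : 2 * k ≤ 2 * (d + 1) := Nat.mul_le_mul_left 2 (mem_range_succ_iff.mp hk)
      rw [Gamma_eq_factorial_of_eq (m := d + 2 * k) (by push_cast; ring),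
        Gamma_eq_factorial_of_eq (m := d + (2 * (d + 1) - 2 * k)) (by push_cast [h2k]; ring)]
  have hΓn : Gamma ((d + 1 : ℕ) : ℝ) = d ! := Gamma_eq_factorial_of_eq (by push_cast; ring)
  have hΓ2n : Gamma (2 * ((d + 1 : ℕ) : ℝ)) = (2 * d + 1)! :=
    Gamma_eq_factorial_of_eq (by push_cast; ring)
  have hΓ4n : Gamma (4 * ((d + 1 : ℕ) : ℝ)) = (4 * d + 3)! :=
    Gamma_eq_factorial_of_eq (by push_cast; ring)
  have key := two_mul_factorial_mul_sum_choose_even_mul_factorial_add_mul_factorial_add d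
  rify at key
  rw [sum_congr rfl hterm, hΓn, hΓ2n, hΓ4n]
  field_simp
  linear_combination key
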